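/- arXiv:1307.7904 — 7 statements merged into one kernel-verified Lean document; each statement's English description precedes it below -/
import Mathlib

section
/- Let P be a box that is nonsignalling (in both directions) and a racbox. Then its outputs satisfy b = x_y ⊕ a ⊕ y' with probability one: for all bits a, b, x0, x1, y, y', if b ≠ x_y ⊕ a ⊕ y' then P a b x0 x1 y y' = 0. (In particular, when a ≠ y' the box operates as an anti-RAC.) -/
set_option maxHeartbeats 1000000


/-- A bipartite box: conditional probability of outputs `a, b` given Alice's
inputs `x0, x1` and Bob's inputs `y, y'`. -/
def IsBox (P : Bool → Bool → Bool → Bool → Bool → Bool → ℝ) : Prop :=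
  (∀ a b x0 x1 y y', 0 ≤ P a b x0 x1 y y') ∧
  (∀ x0 x1 y y', ∑ a : Bool, ∑ b : Bool, P a b x0 x1 y y' = 1)

/-- Nonsignalling from Bob to Alice: Alice's marginal does not depend on `(y, y')`. -/
def NonsignallingBtoA (P : Bool → Bool → Bool → Bool → Bool → Bool → ℝ) : Prop :=
  ∀ a x0 x1 y₁ y₁' y₂ y₂',
    ∑ b : Bool, P a b x0 x1 y₁ y₁' = ∑ b : Bool, P a b x0 x1 y₂ y₂'

/-- Nonsignalling from Alice to Bob: Bob's marginal does not depend on `(x0, x1)`. -/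
def NonsignallingAtoB (P : Bool → Bool → Bool → Bool → Bool → Bool → ℝ) : Prop :=
  ∀ b x0 x1 x0' x1' y y',
    ∑ a : Bool, P a b x0 x1 y y' = ∑ a : Bool, P a b x0' x1' y y'

/-- A racbox: whenever `a = y'`, the box acts as a random access code, i.e.
`b = x_y` with probability one. -/
def IsRacbox (P : Bool → Bool → Bool → Bool → Bool → Bool → ℝ) : Prop :=
  ∀ a b x0 x1 y y', a = y' → b ≠ (if y then x1 else x0) → P a b x0 x1 y y' = 0


/-- **Lemma 1.** A nonsignalling racbox satisfies `b = x_y ⊕ a ⊕ y'` with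
probability one (in particular, for `a ≠ y'` it operates as an anti-RAC). -/
theorem nonsignalling_racbox_antirac
    (P : Bool → Bool → Bool → Bool → Bool → Bool → ℝ)
    (hbox : IsBox P) (hnsBA : NonsignallingBtoA P) (hnsAB : NonsignallingAtoB P)
    (hrac : IsRacbox P) :
    ∀ a b x0 x1 y y' : Bool,
      b ≠ xor (xor (if y then x1 else x0) a) y' → P a b x0 x1 y y' = 0 := by
  intro a b x0 x1 y y' hb
  obtain ⟨hpos, hsum⟩ := hbox
  by_cases hay : a = y'
  · apply hrac _ _ _ _ _ _ hay
    subst hay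
    intro hbe
    apply hb
    subst hbe
    cases a <;> simp
  · have hb' : b = (if y then x1 else x0) := by
      rcases Bool.eq_false_or_eq_true a with h | h <;>
      rcases Bool.eq_false_or_eq_true y' with h2 | h2 <;>
      rcases Bool.eq_false_or_eq_true b with h3 | h3 <;>
      rcases Bool.eq_false_or_eq_true (if y then x1 else x0) with h4 | h4 <;>
        simp_all
    have hy' : y' = !a := by
      rcases Bool.eq_false_or_eq_true a with h | h <;>
      rcases Bool.eq_false_or_eq_true y' with h2 | h2 <;> simp_all
    subst hb' hy'
    obtain ⟨c, hc⟩ : ∃ c, (if y then x1 else x0) = c := ⟨_, rfl⟩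
    rw [hc]
    have hcnot : (if y then !x1 else !x0) = !c := by cases y <;> simp_all
    have h7a := hsum x0 x1 y (!a)
    have h7b := hsum (!x0) (!x1) y (!a)
    have hEA := hnsBA a x0 x1 y (!a) y (!!a)
    have hE1 := hnsAB c x0 x1 (!x0) (!x1) y (!a)
    have hE3 := hnsAB c x0 x1 (!x0) (!x1) y (!!a)
    have hE6 := hnsBA (!a) (!x0) (!x1) y (!a) y (!!a)
    have s0 : P (!a) (!c) x0 x1 y (!a) = 0 :=
      hrac _ _ _ _ _ _ rfl (by simp [hc])
    have r'0 : P (!a) c (!x0) (!x1) y (!a) = 0 :=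
      hrac _ _ _ _ _ _ rfl (by simp [hcnot])
    have z1 : P a (!c) x0 x1 y (!!a) = 0 :=
      hrac _ _ _ _ _ _ (by simp) (by simp [hc])
    have z2 : P a c (!x0) (!x1) y (!!a) = 0 :=
      hrac _ _ _ _ _ _ (by simp) (by simp [hcnot])
    have n1 := hpos (!a) c x0 x1 y (!!a)
    have n2 := hpos a (!c) (!x0) (!x1) y (!a)
    have n3 := hpos (!a) (!c) (!x0) (!x1) y (!!a)
    have n4 := hpos a c x0 x1 y (!a)
    simp only [Fintype.sum_bool] at h7a h7b hEA hE1 hE3 hE6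
    rcases Bool.eq_false_or_eq_true a with h | h <;>
      rcases Bool.eq_false_or_eq_true c with h2 | h2 <;>
        subst h h2 <;>
        simp only [Bool.not_true, Bool.not_false] at s0 r'0 z1 z2 n1 n2 n3 n4 h7a h7b hEA hE1 hE3 hE6 ⊢ <;>
        linarith [s0, r'0, z1, z2, n1, n2, n3, n4, h7a, h7b, hEA, hE1, hE3, hE6]
end

section
/- A nonsignalling racbox simulates PR-correlations. Let P be a box that is nonsignalling (in both directions) and a racbox, and define Q a b x y := P a b false x y false (Alice sets x0 = 0 and inputs x as x1; Bob sets y' = 0 and inputs y). Then Q reproduces PR-correlations with probability one: for all bits a, b, x, y, if a ⊕ b ≠ x ∧ y then Q a b x y = 0. -/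
/-! When Alice's output differs from `y'`, Bob must output the complement of `x_y`. Fix `x` and
`y` and let `c = x_y`. By the racbox condition Bob outputs `c` whenever `a = y'`, so his two
marginals `P(b = c | y' = 0)` and `P(b = c | y' = 1)` add up to at least
`P(a = 0) + P(a = 1) = 1`, plus the probabilities of `a ≠ y', b = c`. Feeding Alice
`x0 = x1 = ¬c` instead, the racbox condition forbids `b = c` when `a = y'`, so the same two
marginals (which do not see Alice's input) add up to at most `P(a = 1) + P(a = 0) = 1`. -/

section Racbox

variable {P : Bool → Bool → Bool → Bool → Bool → Bool → ℝ}

theorem IsRacbox.sum_eq_apply_select (hrac : IsRacbox P) (x0 x1 y y' : Bool) :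
    ∑ b, P y' b x0 x1 y y' = P y' (if y then x1 else x0) x0 x1 y y' :=
  Fintype.sum_eq_single _ fun _ hb => hrac _ _ _ _ _ _ rfl hb

theorem IsRacbox.sum_le_sum_not (hbox : IsBox P) (hrac : IsRacbox P) {b x0 x1 y : Bool}
    (hb : b ≠ (if y then x1 else x0)) (y' : Bool) :
    ∑ a, P a b x0 x1 y y' ≤ ∑ b', P (!y') b' x0 x1 y y' := by
  have hzero : P y' b x0 x1 y y' = 0 := hrac _ _ _ _ _ _ rfl hb
  calc ∑ a, P a b x0 x1 y y' = P (!y') b x0 x1 y y' := by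
        cases y' <;> simp [hzero]
    _ ≤ ∑ b', P (!y') b' x0 x1 y y' :=
        Finset.single_le_sum (fun b' _ => hbox.1 _ b' _ _ _ _) (Finset.mem_univ b)

theorem IsRacbox.sum_add_sum_le_one (hbox : IsBox P) (hnsBA : NonsignallingBtoA P)
    (hnsAB : NonsignallingAtoB P) (hrac : IsRacbox P) (b x0 x1 y : Bool) :
    ∑ a, P a b x0 x1 y false + ∑ a, P a b x0 x1 y true ≤ 1 := by
  have hb : b ≠ (if y then !b else !b) := by cases y <;> cases b <;> decide
  rw [hnsAB b x0 x1 (!b) (!b) y false, hnsAB b x0 x1 (!b) (!b) y true]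
  calc _ ≤ ∑ b', P true b' (!b) (!b) y false + ∑ b', P false b' (!b) (!b) y true :=
        add_le_add (hrac.sum_le_sum_not hbox hb false) (hrac.sum_le_sum_not hbox hb true)
    _ = 1 := by
        have hnorm := hbox.2 (!b) (!b) y false
        rw [Fintype.sum_bool] at hnorm
        rw [hnsBA false (!b) (!b) y true y false]
        linarith

theorem IsRacbox.sum_add_sum_select (hbox : IsBox P) (hnsBA : NonsignallingBtoA P)
    (hrac : IsRacbox P) (x0 x1 y : Bool) :
    ∑ a, P a (if y then x1 else x0) x0 x1 y false + ∑ a, P a (if y then x1 else x0) x0 x1 y true =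
      1 + P true (if y then x1 else x0) x0 x1 y false +
        P false (if y then x1 else x0) x0 x1 y true := by
  have hnorm := hbox.2 x0 x1 y false
  rw [Fintype.sum_bool, hnsBA true x0 x1 y false y true, hrac.sum_eq_apply_select,
    hrac.sum_eq_apply_select] at hnorm
  simp only [Fintype.sum_bool]
  linarith

theorem IsRacbox.eq_zero_of_ne_of_eq_select (hbox : IsBox P) (hnsBA : NonsignallingBtoA P)
    (hnsAB : NonsignallingAtoB P) (hrac : IsRacbox P) {a b x0 x1 y y' : Bool} (ha : a ≠ y')
    (hb : b = if y then x1 else x0) : P a b x0 x1 y y' = 0 := by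
  have hsum := hrac.sum_add_sum_select hbox hnsBA x0 x1 y
  have hle := hrac.sum_add_sum_le_one hbox hnsBA hnsAB (if y then x1 else x0) x0 x1 y
  have h₁ := hbox.1 true (if y then x1 else x0) x0 x1 y false
  have h₀ := hbox.1 false (if y then x1 else x0) x0 x1 y true
  obtain rfl : a = !y' := Bool.eq_not.mpr ha
  subst hb
  cases y' <;> simp only [Bool.not_false, Bool.not_true] <;> linarith

end Racbox

/-- A nonsignalling racbox simulates PR-correlations: with `x0 = false`,
`x1 = x`, `y' = false`, the resulting box `Q a b x y = P a b false x y false`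
satisfies `a ⊕ b = x ∧ y` with probability one. -/
theorem nonsignalling_racbox_simulates_PR
    (P : Bool → Bool → Bool → Bool → Bool → Bool → ℝ)
    (hbox : IsBox P) (hnsBA : NonsignallingBtoA P) (hnsAB : NonsignallingAtoB P)
    (hrac : IsRacbox P)
    (Q : Bool → Bool → Bool → Bool → ℝ)
    (hQ : ∀ a b x y, Q a b x y = P a b false x y false) :
    ∀ a b x y : Bool, xor a b ≠ (x && y) → Q a b x y = 0 := by
  intro a b x y hPR
  have hselect : (if y then x else false) = (x && y) := by cases y <;> simp
  rw [hQ]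
  cases a with
  | false => exact hrac _ _ _ _ _ _ rfl (by simpa [hselect] using hPR)
  | true =>
    rw [Bool.true_xor] at hPR
    exact hrac.eq_zero_of_ne_of_eq_select hbox hnsBA hnsAB (by decide : true ≠ false)
      (hselect ▸ (Bool.ne_not.mp hPR.symm).symm)
end

section
/- The PR-box simulates a nonsignalling racbox. Define the PR-box Q a b x y := (if a ⊕ b = x ∧ y then 1/2 else 0) and define P a b x0 x1 y y' := Q (a ⊕ x0) (b ⊕ y') (x0 ⊕ x1) y. Then P is a box, P is nonsignalling in both directions, P is a racbox, and moreover for all inputs P a b x0 x1 y y' = 1/2 if b = x_y ⊕ a ⊕ y' and P a b x0 x1 y y' = 0 otherwise. -/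
/-- The PR-box. -/
noncomputable def PRbox (a b x y : Bool) : ℝ :=
  if xor a b = (x && y) then 1/2 else 0

/-- Simulation of a nonsignalling racbox with the PR-box (C-NOTs on both wings). -/
noncomputable def Psim (a b x0 x1 y y' : Bool) : ℝ :=
  PRbox (xor a x0) (xor b y') (xor x0 x1) y

/-- The PR-box simulates a nonsignalling racbox: `Psim` is a box, is
nonsignalling in both directions, is a racbox, and satisfies
`P a b x0 x1 y y' = 1/2` if `b = x_y ⊕ a ⊕ y'` and `= 0` otherwise. -/
theorem PRbox_simulates_nonsignalling_racbox :
    IsBox Psim ∧ NonsignallingBtoA Psim ∧ NonsignallingAtoB Psim ∧ IsRacbox Psim ∧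
    (∀ a b x0 x1 y y' : Bool,
      (b = xor (xor (if y then x1 else x0) a) y' → Psim a b x0 x1 y y' = 1/2) ∧
      (b ≠ xor (xor (if y then x1 else x0) a) y' → Psim a b x0 x1 y y' = 0)) := by
  refine ⟨⟨?_, ?_⟩, ?_, ?_, ?_, ?_⟩
  · intro a b x0 x1 y y'
    rcases a with _|_ <;> rcases b with _|_ <;> rcases x0 with _|_ <;> rcases x1 with _|_ <;>
      rcases y with _|_ <;> rcases y' with _|_ <;> norm_num [Psim, PRbox]
  · intro x0 x1 y y'
    rcases x0 with _|_ <;> rcases x1 with _|_ <;> rcases y with _|_ <;> rcases y' with _|_ <;>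
      norm_num [Psim, PRbox, Fintype.sum_bool]
  · intro a x0 x1 y1 y1' y2 y2'
    rcases a with _|_ <;> rcases x0 with _|_ <;> rcases x1 with _|_ <;> rcases y1 with _|_ <;>
      rcases y1' with _|_ <;> rcases y2 with _|_ <;> rcases y2' with _|_ <;>
      norm_num [Psim, PRbox, Fintype.sum_bool]
  · intro b x0 x1 x0' x1' y y'
    rcases b with _|_ <;> rcases x0 with _|_ <;> rcases x1 with _|_ <;> rcases x0' with _|_ <;>
      rcases x1' with _|_ <;> rcases y with _|_ <;> rcases y' with _|_ <;>
      norm_num [Psim, PRbox, Fintype.sum_bool]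
  · intro a b x0 x1 y y'
    rcases a with _|_ <;> rcases b with _|_ <;> rcases x0 with _|_ <;> rcases x1 with _|_ <;>
      rcases y with _|_ <;> rcases y' with _|_ <;> norm_num [Psim, PRbox]
  · intro a b x0 x1 y y'
    rcases a with _|_ <;> rcases b with _|_ <;> rcases x0 with _|_ <;> rcases x1 with _|_ <;>
      rcases y with _|_ <;> rcases y' with _|_ <;> norm_num [Psim, PRbox]
end

section
/- Correctness of the protocol achieving the resource inequality RAC + 1 shared random bit ≥ PR-box + erasure channel: for all bits x, z, y, r : Bool, set the RAC inputs x̃₀ := z and x̃₁ := x, let b̃ := (if y then x̃₁ else x̃₀) be the output of a perfect random access code on Bob's side, and define Alice's output a := r and Bob's output b := r ⊕ (y ∧ b̃). Then PR-correlations hold: a ⊕ b = x ∧ y; and when y = false the message z is delivered intact: b̃ = z. -/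
/-- Correctness of the protocol achieving `RAC + 1 sr-bit ≥ PR + erasure channel`:
Alice inputs `x̃₀ = z`, `x̃₁ = x` to a perfect RAC, Bob's RAC output is
`b̃ = if y then x̃₁ else x̃₀`; Alice outputs `a = r` and Bob outputs
`b = r ⊕ (y ∧ b̃)` using a shared random bit `r`.  Then the PR-correlations
`a ⊕ b = x ∧ y` hold, and for `y = false` the message `z` is delivered intact. -/
theorem rac_protocol_correct (x z y r : Bool)
    (x0 x1 bt a b : Bool)
    (hx0 : x0 = z) (hx1 : x1 = x)
    (hbt : bt = if y then x1 else x0)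
    (ha : a = r) (hb : b = xor r (y && bt)) :
    xor a b = (x && y) ∧ (y = false → bt = z) := by
  subst hx0 hx1 hbt ha hb; cases y <;> cases a <;> cases x1 <;> simp
end

section
/- Bell/CHSH bound for local strategies: let x, y, r_A, r_B be mutually independent random variables on a finite probability space, with x and y uniform on Bool and r_A, r_B taking values in arbitrary finite types. Then for any functions f and g, the probability of the event f(x, r_A) ⊕ g(y, r_B) = x ∧ y is at most 3/4. -/
open scoped Classical

/-- A probability mass function on a finite type. -/
def IsPMF {Ω : Type*} [Fintype Ω] (P : Ω → ℝ) : Prop :=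
  (∀ ω, 0 ≤ P ω) ∧ ∑ ω, P ω = 1

/-- Probability of an event under a pmf. -/
noncomputable def Pr {Ω : Type*} [Fintype Ω] (P : Ω → ℝ) (E : Ω → Prop) : ℝ :=
  ∑ ω, if E ω then P ω else 0

/-- Indicator with a fixed (classical) decidability instance. -/
noncomputable def ind (p : Prop) : ℝ := if p then 1 else 0

lemma ind_nonneg (p : Prop) : 0 ≤ ind p := by
  by_cases h : p <;> simp [ind, h]

lemma prEq {Ω : Type*} [Fintype Ω] (P : Ω → ℝ) (E : Ω → Prop) :
    Pr P E = ∑ ω, ind (E ω) * P ω := by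
  unfold Pr
  refine Finset.sum_congr rfl fun ω _ => ?_
  by_cases h : E ω <;> simp [ind, h]

lemma sum_ind {α : Type*} [Fintype α] (a : α) (F : α → ℝ) :
    ∑ v, ind (a = v) * F v = F a := by
  have h : ∀ v, ind (a = v) * F v = if a = v then F v else 0 := by
    intro v; by_cases h : a = v <;> simp [ind, h]
  simp [h, Finset.sum_ite_eq]

lemma ind_and (p q : Prop) : ind (p ∧ q) = ind p * ind q := by
  by_cases hp : p <;> by_cases hq : q <;> simp [ind, hp, hq]

/-- Bell/CHSH bound for local strategies: if `x, y, rA, rB` are mutually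
independent, with `x` and `y` uniform on `Bool`, then for any local response
functions `f` and `g`, the probability that `f(x,rA) ⊕ g(y,rB) = x ∧ y`
is at most `3/4`. -/
theorem chsh_local_bound {Ω RA RB : Type*} [Fintype Ω] [Fintype RA] [Fintype RB]
    (P : Ω → ℝ) (hP : IsPMF P)
    (x y : Ω → Bool) (rA : Ω → RA) (rB : Ω → RB)
    (hindep : ∀ (vx vy : Bool) (va : RA) (vb : RB),
      Pr P (fun ω => x ω = vx ∧ y ω = vy ∧ rA ω = va ∧ rB ω = vb)
        = Pr P (fun ω => x ω = vx) * Pr P (fun ω => y ω = vy) *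
            Pr P (fun ω => rA ω = va) * Pr P (fun ω => rB ω = vb))
    (hx : ∀ v, Pr P (fun ω => x ω = v) = 1/2)
    (hy : ∀ v, Pr P (fun ω => y ω = v) = 1/2)
    (f : Bool → RA → Bool) (g : Bool → RB → Bool) :
    Pr P (fun ω => xor (f (x ω) (rA ω)) (g (y ω) (rB ω)) = (x ω && y ω)) ≤ 3/4 := by
  obtain ⟨hP0, hP1⟩ := hP
  set pA := fun va => Pr P (fun ω => rA ω = va) with hpA
  set pB := fun vb => Pr P (fun ω => rB ω = vb) with hpB
  have hpA0 : ∀ va, 0 ≤ pA va := by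
    intro va
    rw [hpA]; dsimp only; rw [prEq]
    exact Finset.sum_nonneg fun ω _ => mul_nonneg (ind_nonneg _) (hP0 ω)
  have hpB0 : ∀ vb, 0 ≤ pB vb := by
    intro vb
    rw [hpB]; dsimp only; rw [prEq]
    exact Finset.sum_nonneg fun ω _ => mul_nonneg (ind_nonneg _) (hP0 ω)
  have hpA1 : ∑ va, pA va = 1 := by
    simp only [hpA, prEq]
    rw [Finset.sum_comm]
    rw [← hP1]
    exact Finset.sum_congr rfl fun ω _ => sum_ind (rA ω) (fun _ => P ω)
  have hpB1 : ∑ vb, pB vb = 1 := by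
    simp only [hpB, prEq]
    rw [Finset.sum_comm]
    rw [← hP1]
    exact Finset.sum_congr rfl fun ω _ => sum_ind (rB ω) (fun _ => P ω)
  -- expansion of the event probability
  have expand : ∀ (C : Bool → Bool → RA → RB → Prop),
      Pr P (fun ω => C (x ω) (y ω) (rA ω) (rB ω))
        = ∑ va : RA, ∑ vb : RB, ∑ vx : Bool, ∑ vy : Bool,
            ind (C vx vy va vb) * Pr P (fun ω => x ω = vx ∧ y ω = vy ∧ rA ω = va ∧ rB ω = vb) := by
    intro C
    rw [prEq]
    have h1 : ∀ (va : RA) (vb : RB) (vx vy : Bool),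
        ind (C vx vy va vb) * Pr P (fun ω => x ω = vx ∧ y ω = vy ∧ rA ω = va ∧ rB ω = vb)
        = ∑ ω, ind (y ω = vy) * (ind (x ω = vx) * (ind (rB ω = vb) * (ind (rA ω = va) *
            (ind (C vx vy va vb) * P ω)))) := by
      intro va vb vx vy
      rw [prEq, Finset.mul_sum]
      refine Finset.sum_congr rfl fun ω _ => ?_
      simp only [ind_and]
      ring
    simp only [h1]
    conv_rhs => enter [2, va, 2, vb, 2, vx]; rw [Finset.sum_comm]
    conv_rhs => enter [2, va, 2, vb]; rw [Finset.sum_comm]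
    conv_rhs => enter [2, va]; rw [Finset.sum_comm]
    rw [Finset.sum_comm]
    refine Finset.sum_congr rfl fun ω _ => ?_
    simp only [sum_ind]
  rw [expand (fun vx vy va vb => xor (f vx va) (g vy vb) = (vx && vy))]
  simp only [hindep, hx, hy, ← hpA, ← hpB]
  have step : ∀ va vb, (∑ vx : Bool, ∑ vy : Bool,
      ind ((xor (f vx va) (g vy vb)) = (vx && vy)) * (1/2 * (1/2) * pA va * pB vb))
      ≤ 3/4 * (pA va * pB vb) := by
    intro va vb
    have ha := hpA0 va
    have hb := hpB0 vb
    cases hf0 : f false va <;> cases hf1 : f true va <;> cases hg0 : g false vb <;>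
      cases hg1 : g true vb <;>
      simp [Fintype.sum_bool, hf0, hf1, hg0, hg1, ind] <;> nlinarith [mul_nonneg ha hb]
  refine le_trans (Finset.sum_le_sum fun va _ => Finset.sum_le_sum fun vb _ => step va vb) ?_
  have heq : (∑ va : RA, ∑ vb : RB, 3/4 * (pA va * pB vb))
      = 3/4 * ((∑ va, pA va) * (∑ vb, pB vb)) := by
    rw [Finset.sum_mul_sum, Finset.mul_sum]
    refine Finset.sum_congr rfl fun va _ => ?_
    rw [Finset.mul_sum]
  rw [heq, hpA1, hpB1]; norm_num
end

section
/- Let (X, Y, B) be jointly distributed random variables on a finite probability space, with X, Y : Ω → Bool and B taking values in a finite type β, and let R_A and R_B (taking values in finite types) be such that R_A, R_B and the triple (X, Y, B) are mutually independent. Suppose Alice outputs A = f(X, R_A) and Bob outputs C = g(Y, B, R_B) for some functions f and g, and suppose they simulate PR-correlations perfectly: A ⊕ C = X ∧ Y holds at every point of Ω of positive probability. Then for every value β₀ with P(B = β₀) > 0 there exists a pair of bits (x, y) with P(X = x and Y = y and B = β₀) = 0. -/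
open scoped Classical

lemma Pr_nonneg {Ω : Type*} [Fintype Ω] {P : Ω → ℝ} (h : ∀ ω, 0 ≤ P ω) (E : Ω → Prop) :
    0 ≤ Pr P E :=
  Finset.sum_nonneg fun ω _ => by split <;> simp [h ω]

lemma Pr_pos_exists {Ω : Type*} [Fintype Ω] {P : Ω → ℝ} (h : ∀ ω, 0 ≤ P ω) {E : Ω → Prop}
    (hpos : 0 < Pr P E) : ∃ ω, 0 < P ω ∧ E ω := by
  by_contra hc
  push_neg at hc
  have hz : Pr P E = 0 := Finset.sum_eq_zero fun ω _ => by
    by_cases hE : E ω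
    · have h0 : ¬ 0 < P ω := fun h' => hc ω h' hE
      have : P ω = 0 := le_antisymm (not_lt.mp h0) (h ω)
      simp [hE, this]
    · simp [hE]
  rw [hz] at hpos; exact lt_irrefl _ hpos

lemma sum_Pr_eq_one {Ω α : Type*} [Fintype Ω] [Fintype α] {P : Ω → ℝ} (hP : ∑ ω, P ω = 1)
    (V : Ω → α) : ∑ a, Pr P (fun ω => V ω = a) = 1 := by
  unfold Pr
  rw [Finset.sum_comm]
  simpa using hP

lemma exists_pos_val {Ω α : Type*} [Fintype Ω] [Fintype α] {P : Ω → ℝ} (hP : IsPMF P)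
    (V : Ω → α) : ∃ a, 0 < Pr P (fun ω => V ω = a) := by
  by_contra hc
  push_neg at hc
  have hz : ∀ a ∈ Finset.univ (α := α), Pr P (fun ω => V ω = a) = 0 := fun a _ =>
    le_antisymm (hc a) (Pr_nonneg hP.1 _)
  have := sum_Pr_eq_one hP.2 V
  rw [Finset.sum_eq_zero hz] at this
  norm_num at this

/-- **Lemma 3.** If `R_A`, `R_B` and the triple `(X, Y, B)` are mutually
independent, Alice outputs `A = f(X, R_A)`, Bob outputs `C = g(Y, B, R_B)`,
and the PR-correlations `A ⊕ C = X ∧ Y` hold at every point of positive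
probability, then for every value `β₀` of `B` with positive probability,
the conditional distribution of `(X, Y)` given `B = β₀` vanishes on some
pair `(x, y)`. -/
theorem pr_simulation_forces_vanishing_pair
    {Ω β RA RB : Type*} [Fintype Ω] [Fintype β] [Fintype RA] [Fintype RB]
    (P : Ω → ℝ) (hP : IsPMF P)
    (X Y : Ω → Bool) (B : Ω → β) (rA : Ω → RA) (rB : Ω → RB)
    (hindep : ∀ (va : RA) (vb : RB) (t : Bool × Bool × β),
      Pr P (fun ω => rA ω = va ∧ rB ω = vb ∧ (X ω, Y ω, B ω) = t)
        = Pr P (fun ω => rA ω = va) * Pr P (fun ω => rB ω = vb) *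
            Pr P (fun ω => (X ω, Y ω, B ω) = t))
    (f : Bool → RA → Bool) (g : Bool → β → RB → Bool)
    (hPR : ∀ ω, 0 < P ω →
      xor (f (X ω) (rA ω)) (g (Y ω) (B ω) (rB ω)) = (X ω && Y ω)) :
    ∀ β₀ : β, 0 < Pr P (fun ω => B ω = β₀) →
      ∃ xv yv : Bool, Pr P (fun ω => X ω = xv ∧ Y ω = yv ∧ B ω = β₀) = 0 := by
  intro β₀ _
  by_contra hc
  push_neg at hc
  -- every pair has positive probability
  have hpos : ∀ xv yv : Bool,
      0 < Pr P (fun ω => (X ω, Y ω, B ω) = (xv, yv, β₀)) := by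
    intro xv yv
    have h1 : Pr P (fun ω => (X ω, Y ω, B ω) = (xv, yv, β₀))
        = Pr P (fun ω => X ω = xv ∧ Y ω = yv ∧ B ω = β₀) := by
      unfold Pr
      apply Finset.sum_congr rfl
      intro ω _
      simp [Prod.ext_iff]
    rw [h1]
    exact lt_of_le_of_ne (Pr_nonneg hP.1 _) (Ne.symm (hc xv yv))
  obtain ⟨va, hva⟩ := exists_pos_val hP rA
  obtain ⟨vb, hvb⟩ := exists_pos_val hP rB
  have key : ∀ xv yv : Bool, xor (f xv va) (g yv β₀ vb) = (xv && yv) := by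
    intro xv yv
    have hjoint : 0 < Pr P (fun ω => rA ω = va ∧ rB ω = vb ∧ (X ω, Y ω, B ω) = (xv, yv, β₀)) := by
      rw [hindep]
      exact mul_pos (mul_pos hva hvb) (hpos xv yv)
    obtain ⟨ω, hω, h1, h2, h3⟩ := Pr_pos_exists hP.1 hjoint
    have hx : X ω = xv := by simpa using congrArg Prod.fst h3
    have hy : Y ω = yv := by simpa using congrArg (fun p => p.2.1) h3
    have hb : B ω = β₀ := by simpa using congrArg (fun p => p.2.2) h3
    have := hPR ω hω
    rw [hx, hy, hb, h1, h2] at this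
    exact this
  have h00 := key false false
  have h01 := key false true
  have h10 := key true false
  have h11 := key true true
  revert h00 h01 h10 h11
  cases f false va <;> cases f true va <;> cases g false β₀ vb <;> cases g true β₀ vb <;> decide
end

section
/- There do not exist Boolean random variables A, X, M on a finite probability space such that: A and X are independent and each uniform on Bool; both P(M = false) > 0 and P(M = true) > 0; and there exist bits α and ξ with P(A = α and M = false) = P(M = false) and P(X = ξ and M = true) = P(M = true) (i.e., the value of M = false reveals A with certainty and the value M = true reveals X with certainty). -/
open scoped Classical

/-!
On the event `M = false` we have `A = α` almost surely, and on `M = true` we have `X = ξ`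
almost surely, so the event `A ≠ α ∧ X ≠ ξ` is null. By independence and uniformity it has
probability `1/2 · 1/2 = 1/4`.
-/

section Pr

variable {Ω : Type*} [Fintype Ω] (P : Ω → ℝ)

theorem Pr_and_add_Pr_not_and (E F : Ω → Prop) :
    Pr P (fun ω => E ω ∧ F ω) + Pr P (fun ω => ¬ E ω ∧ F ω) = Pr P F := by
  unfold Pr
  rw [← Finset.sum_add_distrib]
  refine Finset.sum_congr rfl fun ω _ => ?_
  by_cases hE : E ω <;> by_cases hF : F ω <;> simp [hE, hF]

theorem Pr_not_and_eq_zero_of_Pr_and_eq {E F : Ω → Prop}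
    (h : Pr P (fun ω => E ω ∧ F ω) = Pr P F) : Pr P (fun ω => ¬ E ω ∧ F ω) = 0 := by
  linarith [Pr_and_add_Pr_not_and P E F]

variable {P}

theorem Pr_mono (hP : ∀ ω, 0 ≤ P ω) {E F : Ω → Prop} (hEF : ∀ ω, E ω → F ω) :
    Pr P E ≤ Pr P F := by
  refine Finset.sum_le_sum fun ω _ => ?_
  by_cases hE : E ω
  · simp [hE, hEF ω hE]
  · by_cases hF : F ω <;> simp [hE, hF, hP ω]

theorem Pr_or_le (hP : ∀ ω, 0 ≤ P ω) (E F : Ω → Prop) :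
    Pr P (fun ω => E ω ∨ F ω) ≤ Pr P E + Pr P F := by
  unfold Pr
  rw [← Finset.sum_add_distrib]
  refine Finset.sum_le_sum fun ω _ => ?_
  by_cases hE : E ω <;> by_cases hF : F ω <;> simp [hE, hF, hP ω]

end Pr

/-- There are no Boolean random variables `A, X, M` with `A, X` independent
and uniform, both values of `M` of positive probability, and such that
`M = false` reveals `A` with certainty while `M = true` reveals `X` with
certainty. -/
theorem no_message_reveals_both {Ω : Type*} [Fintype Ω] (P : Ω → ℝ) (hP : IsPMF P) :
    ¬ ∃ A X M : Ω → Bool,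
        (∀ va vx : Bool, Pr P (fun ω => A ω = va ∧ X ω = vx)
            = Pr P (fun ω => A ω = va) * Pr P (fun ω => X ω = vx)) ∧
        (∀ v, Pr P (fun ω => A ω = v) = 1/2) ∧
        (∀ v, Pr P (fun ω => X ω = v) = 1/2) ∧
        0 < Pr P (fun ω => M ω = false) ∧
        0 < Pr P (fun ω => M ω = true) ∧
        ∃ α ξ : Bool,
          Pr P (fun ω => A ω = α ∧ M ω = false) = Pr P (fun ω => M ω = false) ∧
          Pr P (fun ω => X ω = ξ ∧ M ω = true) = Pr P (fun ω => M ω = true) := by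
  rintro ⟨A, X, M, hind, hA, hX, -, -, α, ξ, hα, hξ⟩
  have hA_null := Pr_not_and_eq_zero_of_Pr_and_eq P hα
  have hX_null := Pr_not_and_eq_zero_of_Pr_and_eq P hξ
  have hcover : ∀ ω, A ω = !α ∧ X ω = !ξ →
      (¬ A ω = α ∧ M ω = false) ∨ (¬ X ω = ξ ∧ M ω = true) := by
    rintro ω ⟨hAω, hXω⟩
    cases M ω <;> simp [hAω, hXω]
  have hquarter : Pr P (fun ω => A ω = !α ∧ X ω = !ξ) = 1 / 4 := by
    rw [hind, hA, hX]
    norm_num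
  have := (Pr_mono hP.1 hcover).trans (Pr_or_le hP.1 _ _)
  linarith
end
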